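/- arXiv:2307.06276 — 3 statements merged into one kernel-verified Lean document; each statement's English description precedes it below -/
import Mathlib

section
/- Let h : V → {1, ..., 2f} be drawn from a pairwise independent hash family, let F ⊆ V with |F| ≤ f, and let v ∈ V \ F. Then Pr[h(v) = 1 and h(a) ≠ 1 for all a ∈ F] ≥ 1/(4f). -/
/-- If `h : V → {1,…,2f}` is drawn from a pairwise independent hash family `Φ`,
`F ⊆ V` with `|F| ≤ f`, and `v ∉ F`, then
`Pr[h v = 1 ∧ ∀ a ∈ F, h a ≠ 1] ≥ 1/(4f)`. -/
theorem stmt7 {V : Type*} [Fintype V] [DecidableEq V]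
    (f : ℕ) (hf : 1 ≤ f)
    (Φ : Finset (V → ℕ)) (hΦ : Φ.Nonempty)
    (hrange : ∀ h ∈ Φ, ∀ x : V, h x ∈ Finset.Icc 1 (2 * f))
    (hsingle : ∀ x : V, ∀ i ∈ Finset.Icc 1 (2 * f),
      ((Φ.filter (fun h => h x = i)).card : ℝ) = (Φ.card : ℝ) / (2 * f))
    (hpair : ∀ x y : V, x ≠ y → ∀ i ∈ Finset.Icc 1 (2 * f), ∀ j ∈ Finset.Icc 1 (2 * f),
      ((Φ.filter (fun h => h x = i ∧ h y = j)).card : ℝ)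
        = (Φ.card : ℝ) / (2 * f) ^ 2)
    (F : Finset V) (hF : F.card ≤ f) (v : V) (hv : v ∉ F) :
    (Φ.card : ℝ) / (4 * f)
      ≤ ((Φ.filter (fun h => h v = 1 ∧ ∀ a ∈ F, h a ≠ 1)).card : ℝ) := by
  classical
  have h1mem : (1 : ℕ) ∈ Finset.Icc 1 (2 * f) := by
    simp [Finset.mem_Icc]; omega
  set S := Φ.filter (fun h => h v = 1 ∧ ∀ a ∈ F, h a ≠ 1) with hS
  set A := Φ.filter (fun h => h v = 1) with hA
  set B := Φ.filter (fun h => h v = 1 ∧ ∃ a ∈ F, h a = 1) with hB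
  have hAcard : (A.card : ℝ) = (Φ.card : ℝ) / (2 * f) := hsingle v 1 h1mem
  have hsub : A ⊆ S ∪ B := by
    intro h hh
    simp only [hA, hS, hB, Finset.mem_filter, Finset.mem_union] at hh ⊢
    by_cases hc : ∀ a ∈ F, h a ≠ 1
    · exact Or.inl ⟨hh.1, hh.2, hc⟩
    · push_neg at hc
      exact Or.inr ⟨hh.1, hh.2, hc⟩
  have hBsub : B ⊆ F.biUnion (fun a => Φ.filter (fun h => h v = 1 ∧ h a = 1)) := by
    intro h hh
    simp only [hB, Finset.mem_filter, Finset.mem_biUnion] at hh ⊢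
    obtain ⟨hΦh, h1, a, haF, ha1⟩ := hh
    exact ⟨a, haF, hΦh, h1, ha1⟩
  have hBcard : (B.card : ℝ) ≤ (F.card : ℝ) * ((Φ.card : ℝ) / (2 * f) ^ 2) := by
    calc (B.card : ℝ) ≤ ((F.biUnion (fun a => Φ.filter (fun h => h v = 1 ∧ h a = 1))).card : ℝ) := by
          exact_mod_cast Finset.card_le_card hBsub
      _ ≤ ∑ a ∈ F, ((Φ.filter (fun h => h v = 1 ∧ h a = 1)).card : ℝ) := by
          exact_mod_cast Finset.card_biUnion_le
      _ = ∑ a ∈ F, (Φ.card : ℝ) / (2 * f) ^ 2 := by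
          apply Finset.sum_congr rfl
          intro a haF
          exact hpair v a (fun he => hv (he ▸ haF)) 1 h1mem 1 h1mem
      _ = (F.card : ℝ) * ((Φ.card : ℝ) / (2 * f) ^ 2) := by
          rw [Finset.sum_const, nsmul_eq_mul]
  have hAle : (A.card : ℝ) ≤ (S.card : ℝ) + (B.card : ℝ) := by
    have := Finset.card_le_card hsub
    have h2 := Finset.card_union_le S B
    push_cast
    exact_mod_cast le_trans this h2
  have hFle : (F.card : ℝ) ≤ (f : ℝ) := by exact_mod_cast hF
  have hfpos : (0 : ℝ) < f := by exact_mod_cast hf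
  have hΦpos : (0 : ℝ) ≤ (Φ.card : ℝ) := by positivity
  have key : (F.card : ℝ) * ((Φ.card : ℝ) / (2 * f) ^ 2) ≤ (Φ.card : ℝ) / (4 * f) := by
    have e : (f : ℝ) * ((Φ.card : ℝ) / (2 * f) ^ 2) = (Φ.card : ℝ) / (4 * f) := by
      field_simp; ring
    calc (F.card : ℝ) * ((Φ.card : ℝ) / (2 * f) ^ 2)
        ≤ (f : ℝ) * ((Φ.card : ℝ) / (2 * f) ^ 2) := by
          apply mul_le_mul_of_nonneg_right hFle; positivity
      _ = (Φ.card : ℝ) / (4 * f) := e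
  have : (Φ.card : ℝ) / (2 * f) - (Φ.card : ℝ) / (4 * f) ≤ (S.card : ℝ) := by
    linarith [hAcard ▸ hAle, le_trans hBcard key]
  have heq : (Φ.card : ℝ) / (2 * f) - (Φ.card : ℝ) / (4 * f) = (Φ.card : ℝ) / (4 * f) := by
    field_simp; ring
  linarith [heq ▸ this]
end

section
/- Let E' be a nonempty finite set with |E'| ∈ [2^{j−1}, 2^j), and let φ be a pairwise independent hash function mapping each element to a uniform value in [0, 2^ω). Let E'' = {e ∈ E' : φ(e) < 2^{ω−(j+1)}}. Then Pr[|E''| = 1] ≥ 1/8. -/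
/-!
The count `X φ = #{e ∈ E' | φ e < T}` of selected elements satisfies `𝟙[X = 1] ≥ X - X (X - 1)`.
Summing over the family, pairwise independence evaluates the right-hand side exactly: with
`p = T / 2^ω = 2^{-(j+1)}` and `n = #E'`, it is `#Φ (n p - n (n - 1) p²) ≥ #Φ (x - x²)` for
`x = n p ∈ [1/4, 1/2]`, and `x - x² ≥ 3/16` there.
-/

open Finset

theorem card_sub_card_offDiag_le_ite {α : Type*} [DecidableEq α] (s : Finset α) :
    (#s : ℝ) - #s.offDiag ≤ if #s = 1 then 1 else 0 := by
  rw [offDiag_card, Nat.cast_sub (Nat.le_mul_self _), Nat.cast_mul]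
  split_ifs with h
  · simp [h]
  · obtain h0 | h2 : #s = 0 ∨ 2 ≤ #s := by omega
    · simp [h0]
    · have h2' : (2 : ℝ) ≤ #s := by exact_mod_cast h2
      nlinarith

theorem sum_card_filter_sub_sum_card_filter_offDiag_le {ι α : Type*} [DecidableEq α]
    (Φ : Finset ι) (S : Finset α) (P : ι → α → Prop) [∀ φ e, Decidable (P φ e)] :
    ∑ e ∈ S, (#{φ ∈ Φ | P φ e} : ℝ) - ∑ q ∈ S.offDiag, (#{φ ∈ Φ | P φ q.1 ∧ P φ q.2} : ℝ)
      ≤ #{φ ∈ Φ | #{e ∈ S | P φ e} = 1} := by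
  have hfirst : ∑ e ∈ S, #{φ ∈ Φ | P φ e} = ∑ φ ∈ Φ, #{e ∈ S | P φ e} :=
    (sum_card_bipartiteAbove_eq_sum_card_bipartiteBelow P).symm
  have hsecond : ∑ q ∈ S.offDiag, #{φ ∈ Φ | P φ q.1 ∧ P φ q.2}
      = ∑ φ ∈ Φ, #({e ∈ S | P φ e}.offDiag) := by
    have hoff : ∀ φ, ({e ∈ S | P φ e}.offDiag) = {q ∈ S.offDiag | P φ q.1 ∧ P φ q.2} := by
      intro φ
      ext q
      simp only [mem_offDiag, mem_filter]
      tauto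
    simp only [hoff]
    exact (sum_card_bipartiteAbove_eq_sum_card_bipartiteBelow
      fun φ (q : α × α) => P φ q.1 ∧ P φ q.2).symm
  rw [← Nat.cast_sum, ← Nat.cast_sum, hfirst, hsecond, card_filter, Nat.cast_sum, Nat.cast_sum,
    Nat.cast_sum, ← sum_sub_distrib]
  refine sum_le_sum fun φ _ => ?_
  simpa only [Nat.cast_ite, Nat.cast_one, Nat.cast_zero] using card_sub_card_offDiag_le_ite _

theorem card_filter_mem_eq_card_mul {ι γ : Type*} [DecidableEq γ] (Φ : Finset ι) (f : ι → γ)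
    (t : Finset γ) {c : ℝ} (h : ∀ b ∈ t, (#{φ ∈ Φ | f φ = b} : ℝ) = c) :
    (#{φ ∈ Φ | f φ ∈ t} : ℝ) = #t * c := by
  rw [card_eq_sum_card_fiberwise (s := {φ ∈ Φ | f φ ∈ t}) (f := f) (t := t)
    fun φ hφ => (mem_filter.1 hφ).2, Nat.cast_sum, ← nsmul_eq_mul, ← sum_const]
  refine sum_congr rfl fun b hb => ?_
  rw [filter_filter, ← h b hb]
  congr 3
  ext φ
  exact ⟨And.right, fun hφ => ⟨hφ ▸ hb, hφ⟩⟩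

theorem div_eight_le_mul_sub_mul_sq {N n p : ℝ} (hN : 0 ≤ N) (hn : 0 ≤ n) (hp : 0 ≤ p)
    (hlo : 1 / 4 ≤ n * p) (hhi : n * p ≤ 1 / 2) :
    N / 8 ≤ n * (N * p) - (n * n - n) * (N * p ^ 2) := by
  nlinarith [mul_nonneg hN (mul_nonneg (sub_nonneg.2 hlo) (sub_nonneg.2 hhi)),
    mul_nonneg hN (mul_nonneg hn (mul_nonneg hp hp))]

theorem div_two_pow_succ_mem_Icc {n j : ℕ} (hlo : 2 ^ (j - 1) ≤ n) (hhi : n < 2 ^ j) :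
    (n : ℝ) / 2 ^ (j + 1) ∈ Set.Icc (1 / 4) (1 / 2) := by
  have h4 : 2 ^ (j + 1) ≤ 4 * n :=
    calc 2 ^ (j + 1) ≤ 2 ^ (j - 1 + 2) := Nat.pow_le_pow_right two_pos (by omega)
      _ = 4 * 2 ^ (j - 1) := by ring
      _ ≤ 4 * n := by omega
  have h2 : 2 * n ≤ 2 ^ (j + 1) := by rw [pow_succ]; omega
  constructor
  · rw [le_div_iff₀ (by positivity)]
    have : (2 : ℝ) ^ (j + 1) ≤ 4 * n := by exact_mod_cast h4
    linarith
  · rw [div_le_iff₀ (by positivity)]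
    have : 2 * (n : ℝ) ≤ 2 ^ (j + 1) := by exact_mod_cast h2
    linarith

theorem stmt9_general {E : Type*}
    (ω j : ℕ) (hω : j + 1 ≤ ω)
    (Φ : Finset (E → ℕ))
    (E' : Finset E) (hlo : 2 ^ (j - 1) ≤ E'.card) (hhi : E'.card < 2 ^ j)
    (hsingle : ∀ e : E, ∀ v < 2 ^ ω,
      ((Φ.filter (fun φ => φ e = v)).card : ℝ) = (Φ.card : ℝ) / 2 ^ ω)
    (hpair : ∀ e e' : E, e ≠ e' → ∀ v < 2 ^ ω, ∀ w < 2 ^ ω,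
      ((Φ.filter (fun φ => φ e = v ∧ φ e' = w)).card : ℝ)
        = (Φ.card : ℝ) / (2 ^ ω) ^ 2) :
    (Φ.card : ℝ) / 8
      ≤ ((Φ.filter
          (fun φ => (E'.filter (fun e => φ e < 2 ^ (ω - (j + 1)))).card = 1)).card : ℝ) := by
  classical
  set T := 2 ^ (ω - (j + 1)) with hT
  have hTle : T ≤ 2 ^ ω := Nat.pow_le_pow_right two_pos (Nat.sub_le _ _)
  have hp : (T : ℝ) / 2 ^ ω = 1 / 2 ^ (j + 1) := by
    rw [div_eq_div_iff (by positivity) (by positivity), hT, Nat.cast_pow, Nat.cast_ofNat, one_mul,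
      ← pow_add, Nat.sub_add_cancel hω]
  have hfirst : ∀ e, (#{φ ∈ Φ | φ e < T} : ℝ) = #Φ * (T / 2 ^ ω) := fun e => by
    have := card_filter_mem_eq_card_mul Φ (· e) (range T)
      fun v hv => hsingle e v ((mem_range.1 hv).trans_le hTle)
    simp only [mem_range, card_range] at this
    rw [this]; ring
  have hsecond : ∀ e e', e ≠ e' →
      (#{φ ∈ Φ | φ e < T ∧ φ e' < T} : ℝ) = #Φ * (T / 2 ^ ω) ^ 2 := fun e e' he => by
    have := card_filter_mem_eq_card_mul Φ (fun φ => (φ e, φ e')) (range T ×ˢ range T)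
      fun v hv => by
        rw [mem_product, mem_range, mem_range] at hv
        simpa only [Prod.ext_iff] using
          hpair e e' he v.1 (hv.1.trans_le hTle) v.2 (hv.2.trans_le hTle)
    simp only [mem_product, mem_range, card_product, card_range] at this
    rw [this]; push_cast; ring
  have hbonferroni := sum_card_filter_sub_sum_card_filter_offDiag_le Φ E' (fun φ e => φ e < T)
  rw [sum_congr rfl fun e _ => hfirst e,
    sum_congr rfl fun q hq => hsecond q.1 q.2 (mem_offDiag.1 hq).2.2, sum_const, sum_const,
    offDiag_card, nsmul_eq_mul, nsmul_eq_mul, Nat.cast_sub (Nat.le_mul_self _), Nat.cast_mul,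
    hp] at hbonferroni
  obtain ⟨hx1, hx2⟩ := div_two_pow_succ_mem_Icc hlo hhi
  refine le_trans ?_ hbonferroni
  apply div_eight_le_mul_sub_mul_sq (by positivity) (by positivity) (by positivity) <;>
    rwa [mul_one_div]

/-- Isolation via pairwise independent hashing: if `2^{j−1} ≤ |E'| < 2^j` and `φ` maps
each element to a pairwise-independent uniform value in `[0, 2^ω)`, then with probability
at least `1/8` exactly one element `e ∈ E'` satisfies `φ e < 2^{ω−(j+1)}`. -/
theorem stmt9 {E : Type*} [Fintype E] [DecidableEq E]
    (ω j : ℕ) (hj : 1 ≤ j) (hω : j + 1 ≤ ω)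
    (Φ : Finset (E → ℕ)) (hΦ : Φ.Nonempty)
    (E' : Finset E) (hlo : 2 ^ (j - 1) ≤ E'.card) (hhi : E'.card < 2 ^ j)
    (hrange : ∀ φ ∈ Φ, ∀ e : E, φ e < 2 ^ ω)
    (hsingle : ∀ e : E, ∀ v < 2 ^ ω,
      ((Φ.filter (fun φ => φ e = v)).card : ℝ) = (Φ.card : ℝ) / 2 ^ ω)
    (hpair : ∀ e e' : E, e ≠ e' → ∀ v < 2 ^ ω, ∀ w < 2 ^ ω,
      ((Φ.filter (fun φ => φ e = v ∧ φ e' = w)).card : ℝ)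
        = (Φ.card : ℝ) / (2 ^ ω) ^ 2) :
    (Φ.card : ℝ) / 8
      ≤ ((Φ.filter
          (fun φ => (E'.filter (fun e => φ e < 2 ^ (ω - (j + 1)))).card = 1)).card : ℝ) :=
  stmt9_general ω j hω Φ E' hlo hhi hsingle hpair
end

section
/- Any fault-tolerant connectivity labeling scheme that assigns b_0-bit labels to query vertices and b_1-bit labels to faulty vertices and correctly answers all queries ⟨s, t, F⟩ with |F| ≤ f on every n-vertex graph must satisfy b_0 = Ω(f) or b_1 = Ω(n). Specifically, for subgraphs of the complete bipartite graph K_{n, f+1}, the total bit content n·b_0 + (f+1)·b_1 of all labels must be at least (f+1)·n, since distinct subgraphs require distinct label assignments. -/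
/-- Counting lower bound for fault-tolerant connectivity labels. A graph `G` is a
subgraph of `K_{n,f+1}`, encoded by its adjacency function `Fin n → Fin (f+1) → Bool`.
A labeling scheme assigns `b0`-bit labels `L0 G s` to left vertices and `b1`-bit labels
`L1 G t` to right vertices; a decoder, given `L0 G s`, `L1 G t` and the set of labels of
the fault set `F = R − {t}`, must report whether `s,t` are connected in `G − F`, i.e.,
whether the edge `{s,t}` exists. Then the total bit content of all labels must be at
least `(f+1)·n`: `(f+1)·n ≤ n·b0 + (f+1)·b1`. -/
theorem stmt13 (n f b0 b1 : ℕ)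
    (L0 : (Fin n → Fin (f + 1) → Bool) → Fin n → (Fin b0 → Bool))
    (L1 : (Fin n → Fin (f + 1) → Bool) → Fin (f + 1) → (Fin b1 → Bool))
    (answer : (Fin b0 → Bool) → (Fin b1 → Bool) → Finset (Fin b1 → Bool) → Bool)
    (hcorrect : ∀ (G : Fin n → Fin (f + 1) → Bool) (s : Fin n) (t : Fin (f + 1)),
      answer (L0 G s) (L1 G t) ((Finset.univ.erase t).image (L1 G)) = G s t) :
    (f + 1) * n ≤ n * b0 + (f + 1) * b1 := by
  set Φ : (Fin n → Fin (f + 1) → Bool) →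
      (Fin n → Fin b0 → Bool) × (Fin (f + 1) → Fin b1 → Bool) :=
    fun G => (L0 G, L1 G) with hΦ
  have hinj : Function.Injective Φ := by
    intro G G' h
    have h0 : L0 G = L0 G' := congrArg Prod.fst h
    have h1 : L1 G = L1 G' := congrArg Prod.snd h
    funext s t
    have := hcorrect G s t
    rw [h0, h1] at this
    rw [← this, hcorrect G' s t]
  have hcard := Fintype.card_le_of_injective Φ hinj
  simp only [Fintype.card_prod, Fintype.card_fun, Fintype.card_bool, Fintype.card_fin,
    ← pow_mul, ← pow_add] at hcard
  have := (Nat.pow_le_pow_iff_right (by norm_num : 1 < 2)).mp hcard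
  rw [Nat.mul_comm n b0, Nat.mul_comm (f + 1) b1]; exact this
end
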